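/- arXiv:2311.16735 — 5 statements merged into one kernel-verified Lean document; each statement's English description precedes it below -/
import Mathlib

section
/- Let a, λ, m > 0 with 2λ + a < 1, set A = 1 + m + a - mλ, b = 1 + a + 2m(1-λ), B = (1 + mλ)/b, and define C₀ = -m³λ(λ² - 5λ + 4) + m²λ((2a+6)λ - 8 - 4a) - mλ(3 + 5a + a²) - 1 - m - a. Then C₀ < 0 for all 0 ≤ λ < 1. -/
theorem C0_neg (a l m : ℝ) (ha : 0 < a) (hl : 0 < l) (hm : 0 < m)
    (hcond : 2 * l + a < 1) (hl1 : l < 1) :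
    -m^3 * l * (l^2 - 5*l + 4) + m^2 * l * ((2*a + 6) * l - 8 - 4*a)
      - m * l * (3 + 5*a + a^2) - 1 - m - a < 0 := by
  nlinarith [mul_pos (mul_pos (pow_pos hm 3) hl) (mul_pos (sub_pos.2 hl1) (by linarith : (0:ℝ) < 4 - l)),
    mul_pos (mul_pos (pow_pos hm 2) hl) (by nlinarith : (0:ℝ) < 8 + 4*a - (2*a+6)*l),
    mul_pos (mul_pos hm hl) (by nlinarith : (0:ℝ) < 3 + 5*a + a^2)]
end

section
/- Let y > 1, Y = y e^{-y}, and let x ∈ (0,1) solve x - ln x = y - ln y. Define c₂ = 1/e, d₂ = e - 1 - c₂ e = e - 2, and z₂(y) = (1 - d₂Y - √((1 - d₂Y)² - 4c₂Y))/(2c₂Y). Then x < z₂(y)·Y. -/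
/-!
Write `Y = x e^{-x}` (the level equation says exactly that `x e^{-x} = y e^{-y}`). Then
`z₂ Y` is the smaller root of `q(t) = c₂ t² - (1 - d₂ Y) t + Y`, so it suffices that `q(x) > 0`
and that `x` lies left of the vertex of `q`. The latter follows from `x < 1` and `Y < 1/e`. For
the former, `q(x) = x e^{-x} H(x)` with `H(t) = t e^{t-1} - e^t + 1 + (e - 2) t`; here
`H'' (t) = e^{t-1} (t + 2 - e)`, so `H` is strictly concave on `[0, e - 2]` and strictly convex on
`[e - 2, 1]`. Since `H(1) = H'(1) = 0`, convexity gives `H > 0` on `[e - 2, 1)`, and then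
`H(0) = 0 < H(e - 2)` and concavity give `H > 0` on `(0, e - 2)`.
-/

open Real Set

theorem lt_quadratic_smallerRoot {a b c x : ℝ} (ha : 0 < a) (hq : 0 < a * x ^ 2 - b * x + c)
    (hx : 2 * a * x < b) : x < (b - √(b ^ 2 - 4 * a * c)) / (2 * a) := by
  have hsqrt : √(b ^ 2 - 4 * a * c) < b - 2 * a * x := by
    rw [sqrt_lt' (by linarith)]
    nlinarith [mul_pos ha hq]
  rw [lt_div_iff₀ (by positivity)]
  linarith

theorem StrictConvexOn.lt_of_hasDerivAt_eq_zero {S : Set ℝ} {f : ℝ → ℝ} {x y : ℝ}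
    (hf : StrictConvexOn ℝ S f) (hx : x ∈ S) (hy : y ∈ S) (hxy : x < y)
    (hf' : HasDerivAt f 0 y) : f y < f x := by
  have hslope := hf.slope_lt_of_hasDerivAt hx hy hxy hf'
  rw [slope_def_field, div_neg_iff] at hslope
  rcases hslope with ⟨-, h⟩ | ⟨h, -⟩ <;> linarith

theorem mul_exp_neg_lt_exp_neg_one {t : ℝ} (ht : t ≠ 1) : t * exp (-t) < exp (-1) := by
  have h : t < exp (t - 1) := by
    simpa using add_one_lt_exp (sub_ne_zero.mpr ht)
  calc t * exp (-t) < exp (t - 1) * exp (-t) := by gcongr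
    _ = exp (-1) := by rw [← exp_add]; ring_nf

theorem mul_exp_neg_eq_of_sub_log_eq {x y : ℝ} (hx : 0 < x) (hy : 0 < y)
    (h : x - log x = y - log y) : x * exp (-x) = y * exp (-y) := by
  have h' := congrArg exp (show log x + -x = log y + -y by linarith)
  rwa [exp_add, exp_add, exp_log hx, exp_log hy] at h'

namespace LotkaVolterra

noncomputable def gap (t : ℝ) : ℝ :=
  t * exp (t - 1) - exp t + 1 + (exp 1 - 2) * t

noncomputable def gapDeriv (t : ℝ) : ℝ :=
  exp (t - 1) * (1 + t) - exp t + (exp 1 - 2)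

theorem hasDerivAt_gap (t : ℝ) : HasDerivAt gap (gapDeriv t) t := by
  have hexp : HasDerivAt (fun s ↦ exp (s - 1)) (exp (t - 1)) t := by
    simpa using ((hasDerivAt_id t).sub_const 1).exp
  refine ((((hasDerivAt_id t).mul hexp).sub (hasDerivAt_exp t)).add_const 1).add
    ((hasDerivAt_id t).const_mul (exp 1 - 2)) |>.congr_deriv ?_
  simp only [gapDeriv, id]
  ring

theorem hasDerivAt_gapDeriv (t : ℝ) :
    HasDerivAt gapDeriv (exp (t - 1) * (t + 2 - exp 1)) t := by
  have hexp : HasDerivAt (fun s ↦ exp (s - 1)) (exp (t - 1)) t := by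
    simpa using ((hasDerivAt_id t).sub_const 1).exp
  refine ((hexp.mul ((hasDerivAt_id t).const_add 1)).sub (hasDerivAt_exp t)).add_const
    (exp 1 - 2) |>.congr_deriv ?_
  rw [show exp t = exp (t - 1) * exp 1 by rw [← exp_add]; ring_nf]
  simp only [id]
  ring

theorem deriv2_gap (t : ℝ) : deriv^[2] gap t = exp (t - 1) * (t + 2 - exp 1) := by
  have hderiv : deriv gap = gapDeriv := funext fun s ↦ (hasDerivAt_gap s).deriv
  simp only [Function.iterate_succ, Function.iterate_zero, Function.comp_apply, id, hderiv]
  exact (hasDerivAt_gapDeriv t).deriv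

theorem continuous_gap : Continuous gap := by
  unfold gap
  fun_prop

theorem gap_zero : gap 0 = 0 := by simp [gap]

theorem gap_one : gap 1 = 0 := by simp [gap]; ring

theorem gapDeriv_one : gapDeriv 1 = 0 := by simp [gapDeriv]; ring

theorem strictConcaveOn_gap : StrictConcaveOn ℝ (Icc 0 (exp 1 - 2)) gap := by
  refine strictConcaveOn_of_deriv2_neg (convex_Icc _ _) continuous_gap.continuousOn ?_
  intro t ht
  rw [interior_Icc] at ht
  rw [deriv2_gap]
  exact mul_neg_of_pos_of_neg (exp_pos _) (by linarith [ht.2])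

theorem strictConvexOn_gap : StrictConvexOn ℝ (Icc (exp 1 - 2) 1) gap := by
  refine strictConvexOn_of_deriv2_pos (convex_Icc _ _) continuous_gap.continuousOn ?_
  intro t ht
  rw [interior_Icc] at ht
  rw [deriv2_gap]
  exact mul_pos (exp_pos _) (by linarith [ht.1])

theorem gap_pos_of_mem_Ico {t : ℝ} (ht : t ∈ Ico (exp 1 - 2) 1) : 0 < gap t := by
  have h1 : (1 : ℝ) ∈ Icc (exp 1 - 2) 1 := ⟨by linarith [exp_one_lt_three], le_rfl⟩
  have h := strictConvexOn_gap.lt_of_hasDerivAt_eq_zero (Ico_subset_Icc_self ht) h1 ht.2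
    (gapDeriv_one ▸ hasDerivAt_gap 1)
  rwa [gap_one] at h

theorem gap_pos {t : ℝ} (ht : t ∈ Ioo 0 1) : 0 < gap t := by
  rcases lt_or_ge t (exp 1 - 2) with hlt | hge
  · have he : 0 < exp 1 - 2 := by linarith [exp_one_gt_two]
    have hmid : 0 < gap (exp 1 - 2) :=
      gap_pos_of_mem_Ico ⟨le_rfl, by linarith [exp_one_lt_three]⟩
    have h := strictConcaveOn_gap.lt_on_openSegment ⟨le_rfl, he.le⟩ ⟨he.le, le_rfl⟩ he.ne
      (by rw [openSegment_eq_Ioo he]; exact ⟨ht.1, hlt⟩)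
    rwa [gap_zero, min_eq_left hmid.le] at h
  · exact gap_pos_of_mem_Ico ⟨hge, ht.2⟩

theorem mul_exp_neg_mul_gap (x : ℝ) :
    x * exp (-x) * gap x
      = 1 / exp 1 * x ^ 2 - (1 - (exp 1 - 2) * (x * exp (-x))) * x + x * exp (-x) := by
  have e1 : exp (-x) * exp (x - 1) = 1 / exp 1 := by
    rw [← exp_add, one_div, ← exp_neg]; ring_nf
  have e2 : exp (-x) * exp x = 1 := by rw [← exp_add]; simp
  unfold gap
  linear_combination x ^ 2 * e1 - x * e2

end LotkaVolterra

open LotkaVolterra in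
theorem x_lt_z2_mul_Y
    (y x : ℝ) (hy : 1 < y) (hx : x ∈ Set.Ioo (0:ℝ) 1)
    (heq : x - Real.log x = y - Real.log y) :
    let Y := y * Real.exp (-y)
    let c₂ := 1 / Real.exp 1
    let d₂ := Real.exp 1 - 2
    x < ((1 - d₂ * Y - Real.sqrt ((1 - d₂ * Y)^2 - 4 * c₂ * Y)) / (2 * c₂ * Y)) * Y := by
  intro Y c₂ d₂
  have hY : Y = x * exp (-x) := (mul_exp_neg_eq_of_sub_log_eq hx.1 (by linarith) heq).symm
  have hY_pos : 0 < Y := by rw [hY]; exact mul_pos hx.1 (exp_pos _)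
  have hY_lt : Y < c₂ := by
    rw [hY, show c₂ = exp (-1) by simp only [c₂, exp_neg, one_div]]
    exact mul_exp_neg_lt_exp_neg_one hx.2.ne
  have hc₂ : 0 < c₂ := by positivity
  have hd₂ : 0 < d₂ := by linarith [exp_one_gt_two]
  have hc₂d₂ : c₂ * (d₂ + 2) = 1 := by simp only [c₂, d₂]; field_simp; ring
  have hq : 0 < c₂ * x ^ 2 - (1 - d₂ * Y) * x + Y := by
    have hfactor := mul_exp_neg_mul_gap x
    rw [← hY] at hfactor
    exact hfactor ▸ mul_pos hY_pos (gap_pos hx)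
  have hvertex : 2 * c₂ * x < 1 - d₂ * Y := by
    nlinarith [mul_lt_mul_of_pos_left hY_lt hd₂, mul_lt_mul_of_pos_left hx.2 hc₂]
  rw [div_mul_eq_mul_div, mul_div_mul_right _ _ hY_pos.ne']
  exact lt_quadratic_smallerRoot hc₂ hq hvertex
end

section
/- For y > 1 define Y = y e^{-y}, c₂ = 1/e, d₂ = e - 2, z₂(y) = (1 - d₂Y - √((1 - d₂Y)² - 4c₂Y))/(2c₂Y), and z₀(y) = 1/(1 - (e-1)Y). Then 1 < z₂(y) < z₀(y) < e. -/
set_option maxHeartbeats 1000000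


theorem z2_lt_z0_lt_e (y : ℝ) (hy : 1 < y) :
    let Y := y * Real.exp (-y)
    let c₂ := 1 / Real.exp 1
    let d₂ := Real.exp 1 - 2
    let z₂ := (1 - d₂ * Y - Real.sqrt ((1 - d₂ * Y)^2 - 4 * c₂ * Y)) / (2 * c₂ * Y)
    let z₀ := 1 / (1 - (Real.exp 1 - 1) * Y)
    1 < z₂ ∧ z₂ < z₀ ∧ z₀ < Real.exp 1 := by
  intro Y c₂ d₂ z₂ z₀
  have hE : (2:ℝ) < Real.exp 1 := by nlinarith [Real.exp_one_gt_d9]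
  have hEpos : (0:ℝ) < Real.exp 1 := Real.exp_pos 1
  have hY0 : 0 < Y := mul_pos (by linarith) (Real.exp_pos _)
  have hYE : Y * Real.exp 1 < 1 := by
    have h1 : y < Real.exp (y - 1) := by
      nlinarith [Real.add_one_lt_exp (show y - 1 ≠ 0 by intro h; nlinarith)]
    have h2 : Y * Real.exp 1 = y * Real.exp (1 - y) := by
      show y * Real.exp (-y) * Real.exp 1 = _
      rw [mul_assoc, ← Real.exp_add]; ring_nf
    have h3 : Real.exp (1 - y) * Real.exp (y - 1) = 1 := by
      rw [← Real.exp_add]; simp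
    have h4 := mul_lt_mul_of_pos_right h1 (Real.exp_pos (1 - y))
    rw [h2]; nlinarith [Real.exp_pos (1 - y)]
  set E := Real.exp 1 with hEdef
  have hEne : E ≠ 0 := ne_of_gt hEpos
  -- abbreviations
  have hu0 : 0 < 1 - (E - 1) * Y := by nlinarith [mul_pos hY0 hEpos]
  have hu1 : 1 - (E - 1) * Y < 1 := by nlinarith
  have huE : 1 < E * (1 - (E - 1) * Y) := by nlinarith [mul_pos hY0 hEpos]
  -- z₀ bounds
  have hz0gt : 1 < z₀ := by
    show (1:ℝ) < 1 / (1 - (E - 1) * Y)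
    rw [lt_div_iff₀ hu0]; linarith
  have hz0lt : z₀ < E := by
    show 1 / (1 - (E - 1) * Y) < E
    rw [div_lt_iff₀ hu0]; linarith
  -- discriminant
  set D := (1 - d₂ * Y)^2 - 4 * c₂ * Y with hDdef
  have hDeq : D = (1 - (E - 2) * Y)^2 - 4 * (1/E) * Y := rfl
  have hD0 : 0 < D := by
    have key : E^2 * D = (1 - Y*E) * (E^2 - (E-2)^2 * (Y*E)) := by
      rw [hDeq]; field_simp; ring
    have hpos2 : 0 < E^2 - (E-2)^2 * (Y*E) := by
      nlinarith [mul_le_mul_of_nonneg_left hYE.le (sq_nonneg (E-2))]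
    nlinarith [mul_pos (sub_pos.mpr hYE) hpos2, sq_nonneg E]
  set S := Real.sqrt D with hSdef
  have hS0 : 0 < S := Real.sqrt_pos.mpr hD0
  have hS2 : S^2 = D := Real.sq_sqrt hD0.le
  have hden : 0 < 2 * c₂ * Y := by
    show 0 < 2 * (1/E) * Y
    positivity
  -- z₂ > 1
  have hBA : 0 < 1 - (E - 2) * Y - 2 * (1/E) * Y := by
    have h5 : E * (1 - (E - 2) * Y - 2 * (1/E) * Y) = E - E*(E-2)*Y - 2*Y := by
      field_simp
    nlinarith [mul_pos hY0 hEpos]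
  have hsqlt : D < (1 - (E - 2) * Y - 2 * (1/E) * Y)^2 := by
    have key2 : E^2 * ((1 - (E - 2) * Y - 2 * (1/E) * Y)^2 - D) = 4*Y^2*(1 + (E-2)*E) := by
      rw [hDeq]; field_simp; ring
    nlinarith [sq_nonneg Y, mul_pos (mul_pos hY0 hY0) hEpos]
  have hS_lt : S < 1 - (E - 2) * Y - 2 * (1/E) * Y := by
    rw [hSdef, show ((1 - (E - 2) * Y)^2 - 4 * (1/E) * Y : ℝ) = D from hDeq.symm] at *
    exact (Real.sqrt_lt' hBA).mpr hsqlt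
  have hz2gt : 1 < z₂ := by
    show (1:ℝ) < (1 - (E - 2) * Y - S) / (2 * (1/E) * Y)
    rw [lt_div_iff₀ (show (0:ℝ) < 2 * (1/E) * Y from hden)]
    linarith
  -- z₂ < z₀
  have hz2lt : z₂ < z₀ := by
    show (1 - (E - 2) * Y - S) / (2 * (1/E) * Y) < 1 / (1 - (E - 1) * Y)
    rw [div_lt_div_iff₀ (show (0:ℝ) < 2 * (1/E) * Y from hden) hu0]
    have key3 : E^2 * (D * (1 - (E - 1) * Y)^2
        - ((1 - (E - 2) * Y) * (1 - (E - 1) * Y) - 2 * (1/E) * Y)^2)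
        = 4*Y^2*(E-1)*(1 - Y*E) := by
      rw [hDeq]; field_simp; ring
    have hSu : 0 < S * (1 - (E - 1) * Y) := mul_pos hS0 hu0
    have hrhs : 0 < 4*Y^2*(E-1)*(1 - Y*E) := by
      have h6 : 0 < 1 - Y*E := by linarith
      have h7 : 0 < E - 1 := by linarith
      positivity
    have hX : 0 < D * (1 - (E - 1) * Y)^2
        - ((1 - (E - 2) * Y) * (1 - (E - 1) * Y) - 2 * (1/E) * Y)^2 := by
      have h8 : D * (1 - (E - 1) * Y)^2
          - ((1 - (E - 2) * Y) * (1 - (E - 1) * Y) - 2 * (1/E) * Y)^2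
          = (E^2 * (D * (1 - (E - 1) * Y)^2
          - ((1 - (E - 2) * Y) * (1 - (E - 1) * Y) - 2 * (1/E) * Y)^2)) / E^2 := by
        field_simp
      rw [h8, key3]
      exact div_pos hrhs (by positivity)
    have hsq : ((1 - (E - 2) * Y) * (1 - (E - 1) * Y) - 2 * (1/E) * Y)^2
        < (S * (1 - (E - 1) * Y))^2 := by
      have h9 : (S * (1 - (E - 1) * Y))^2 = D * (1 - (E - 1) * Y)^2 := by
        rw [mul_pow, hS2]
      rw [h9]; linarith [hX]
    have hmain := lt_of_pow_lt_pow_left₀ 2 hSu.le hsq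
    nlinarith
  exact ⟨hz2gt, hz2lt, hz0lt⟩
end

section
/- Let z ∈ (1, e), c₂ = 1/e, d₂ = e - 2, and Y ∈ (0, 1/e) satisfy c₂z²Y - (1 - d₂Y)z + 1 = 0. Then 2c₂Yz - (1 - d₂Y) < 0, and hence by implicit differentiation dz/dY = -(c₂z² + d₂z)/(2c₂Yz - (1 - d₂Y)) > 0. -/
theorem z2_implicit_deriv_pos
    (z Y : ℝ) (hz : z ∈ Set.Ioo (1:ℝ) (Real.exp 1))
    (hY : Y ∈ Set.Ioo (0:ℝ) (1 / Real.exp 1))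
    (heq : (1 / Real.exp 1) * z^2 * Y - (1 - (Real.exp 1 - 2) * Y) * z + 1 = 0) :
    2 * (1 / Real.exp 1) * Y * z - (1 - (Real.exp 1 - 2) * Y) < 0 ∧
    0 < -((1 / Real.exp 1) * z^2 + (Real.exp 1 - 2) * z) /
        (2 * (1 / Real.exp 1) * Y * z - (1 - (Real.exp 1 - 2) * Y)) := by
  obtain ⟨hz1, hz2⟩ := hz
  obtain ⟨hY1, hY2⟩ := hY
  have he : (0:ℝ) < Real.exp 1 := Real.exp_pos 1
  have he2 : (2:ℝ) < Real.exp 1 := by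
    have := Real.add_one_lt_exp (x := 1) one_ne_zero
    linarith
  have hz0 : 0 < z := by linarith
  -- key: (1/e) * Y * z^2 < 1
  have hkey : (1 / Real.exp 1) * Y * z^2 < 1 := by
    have h1 : Y * z^2 < (1 / Real.exp 1) * (Real.exp 1)^2 := by
      have hzz : z^2 < (Real.exp 1)^2 := by nlinarith
      nlinarith
    have hinv : (1 / Real.exp 1) * Real.exp 1 = 1 := by field_simp
    nlinarith [h1, hinv, mul_lt_mul_of_pos_left h1 (show (0:ℝ) < 1 / Real.exp 1 by positivity)]
  have hden : 2 * (1 / Real.exp 1) * Y * z - (1 - (Real.exp 1 - 2) * Y) < 0 := by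
    have hmul : (2 * (1 / Real.exp 1) * Y * z - (1 - (Real.exp 1 - 2) * Y)) * z
        = (1 / Real.exp 1) * Y * z^2 - 1 := by nlinarith [heq]
    nlinarith [hkey, hmul, hz0]
  refine ⟨hden, ?_⟩
  apply div_pos_of_neg_of_neg
  · have : 0 < (1 / Real.exp 1) * z^2 + (Real.exp 1 - 2) * z := by
      have : 0 < (1 / Real.exp 1) * z^2 := by positivity
      nlinarith
    linarith
  · exact hden
end

section
/- Let λ*, a, m > 0, u > h(λ*) where h(s) = (1-s)(s+a), and suppose a < h(s) on the relevant region. Along the barrier defined by U_a(x,s) = (1/m)(x - a ln x) + s - λ* ln s = U_a(u, λ*), the s-value ŝ at which the barrier meets x = h(ŝ) with ŝ < λ* satisfies ŝ > λ* · exp(-(1/(mλ*))(u - a - a ln(u/a)) - 1). -/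
theorem barrier_lower_bound
    (a lamStar m u sHat : ℝ)
    (ha : 0 < a) (hlam : 0 < lamStar) (hm : 0 < m)
    (hu : (1 - lamStar) * (lamStar + a) < u)
    (hsHat : 0 < sHat) (hsHatlt : sHat < lamStar)
    (hah : ∀ s, 0 < s → s ≤ lamStar → a < (1 - s) * (s + a))
    (hbar : (1/m) * ((1 - sHat) * (sHat + a) - a * Real.log ((1 - sHat) * (sHat + a)))
        + sHat - lamStar * Real.log sHat
      = (1/m) * (u - a * Real.log u) + lamStar - lamStar * Real.log lamStar) :
    sHat > lamStar * Real.exp (-(1 / (m * lamStar)) * (u - a - a * Real.log (u / a)) - 1) := by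
  set H := (1 - sHat) * (sHat + a) with hHdef
  have haH : a < H := hah sHat hsHat hsHatlt.le
  have hHpos : 0 < H := ha.trans haH
  have hua : a < u := (hah lamStar hlam le_rfl).trans hu
  have hupos : 0 < u := ha.trans hua
  have hlog : Real.log H - Real.log a ≤ H / a - 1 := by
    have h := Real.log_le_sub_one_of_pos (div_pos hHpos ha)
    rwa [Real.log_div hHpos.ne' ha.ne'] at h
  have hphi : a - a * Real.log a ≤ H - a * Real.log H := by
    have := mul_le_mul_of_nonneg_left hlog ha.le
    have h2 : a * (H / a - 1) = H - a := by field_simp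
    nlinarith
  have hminv : 0 < 1 / m := by positivity
  have key : sHat - lamStar * Real.log sHat
      ≤ (1/m) * (u - a * Real.log u - a + a * Real.log a) + lamStar
        - lamStar * Real.log lamStar := by
    have h1 : (1/m) * (a - a * Real.log a) ≤ (1/m) * (H - a * Real.log H) :=
      mul_le_mul_of_nonneg_left hphi hminv.le
    nlinarith [hbar]
  have hE : -(1 / (m * lamStar)) * (u - a - a * Real.log (u / a)) - 1
      = -((1/m) * (u - a * Real.log u - a + a * Real.log a) + lamStar) / lamStar := by
    rw [Real.log_div hupos.ne' ha.ne']
    field_simp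
    ring
  have hlt : lamStar * Real.log sHat
      > -((1/m) * (u - a * Real.log u - a + a * Real.log a) + lamStar)
        + lamStar * Real.log lamStar := by linarith
  have hlogs : Real.log sHat
      > -((1/m) * (u - a * Real.log u - a + a * Real.log a) + lamStar) / lamStar
        + Real.log lamStar := by
    rw [gt_iff_lt, div_add' _ _ _ hlam.ne', div_lt_iff₀ hlam]
    nlinarith
  calc lamStar * Real.exp (-(1 / (m * lamStar)) * (u - a - a * Real.log (u / a)) - 1)
      = Real.exp (-((1/m) * (u - a * Real.log u - a + a * Real.log a) + lamStar) / lamStar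
          + Real.log lamStar) := by
        rw [hE, Real.exp_add, Real.exp_log hlam]; ring
    _ < Real.exp (Real.log sHat) := Real.exp_lt_exp.mpr hlogs
    _ = sHat := Real.exp_log hsHat
end
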